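/- (Case 2 descent) Let $p \ge 5$ be a prime and let $x, r, y$ be integers with $\gcd(x,r) = 1$, $r \ge 1$, satisfying $(x-3r)^3+(x-2r)^3+(x-r)^3+x^3+(x+r)^3+(x+2r)^3+(x+3r)^3 = y^p$. Suppose $7 \nmid x$, $2 \nmid x$ and $3 \mid x$. Then there exist integers $w_1, w_2$ with $x = 3^{p-1} w_1^p$, $x^2 + 12r^2 = 3 \cdot 7^{p-1} w_2^p$, and consequently $7^{p-1} w_2^p - 3^{2p-3} w_1^{2p} = 4 r^2$. -/

import Mathlib

/-!
The seven cubes sum to `7x(x² + 12r²)`, so `7 ∣ y`; writing `y = 7w` and `x = 3u` gives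
`9u · (3u² + 4r²) = 7^(p-1) w^p`. Since `7 ∤ 9u`, the whole power `7^(p-1)` divides
`3u² + 4r²`, leaving a product of two coprime factors equal to `w^p`. The second factor is
positive, hence a `p`-th power, and then so is `9u`; as `3` divides its `p`-th root,
`x = 3^(p-1) w₁^p`. The last identity is the second one with `x²` substituted, divided by `3`.
-/

theorem sum_seven_cubes_eq (x r : ℤ) :
    (x - 3 * r) ^ 3 + (x - 2 * r) ^ 3 + (x - r) ^ 3 + x ^ 3 + (x + r) ^ 3 + (x + 2 * r) ^ 3 +
      (x + 3 * r) ^ 3 = 7 * (x * (x ^ 2 + 12 * r ^ 2)) := by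
  ring

theorem eq_pow_pred_mul_pow_of_mul_eq_mul_pow {M : Type*} [CommMonoidWithZero M]
    [IsCancelMulZero M] {q m w : M} {n : ℕ} (hq : q ≠ 0) (hn : n ≠ 0) (h : q * m = (q * w) ^ n) :
    m = q ^ (n - 1) * w ^ n := by
  refine mul_left_cancel₀ hq ?_
  rw [h, mul_pow, ← mul_assoc, ← pow_succ', Nat.sub_add_cancel (Nat.one_le_iff_ne_zero.mpr hn)]

theorem Prime.exists_eq_pow_pred_mul_pow_of_mul_eq_pow {M : Type*} [CommMonoidWithZero M]
    [IsCancelMulZero M] {q m y : M} {n : ℕ} (hq : Prime q) (hn : n ≠ 0) (h : q * m = y ^ n) :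
    ∃ w, m = q ^ (n - 1) * w ^ n := by
  obtain ⟨w, rfl⟩ := hq.dvd_of_dvd_pow (Dvd.intro m h)
  exact ⟨w, eq_pow_pred_mul_pow_of_mul_eq_mul_pow hq.ne_zero hn h⟩

theorem IsCoprime.exists_eq_mul_of_mul_eq_mul {R : Type*} [CommRing R] [IsDomain R]
    {c a b v : R} (hc : c ≠ 0) (hca : IsCoprime c a) (h : a * b = c * v) :
    ∃ b', b = c * b' ∧ a * b' = v := by
  obtain ⟨b', rfl⟩ := hca.dvd_of_dvd_mul_left (Dvd.intro v h.symm)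
  refine ⟨b', rfl, mul_left_cancel₀ hc ?_⟩
  rw [← h]
  ring

theorem Int.exists_pow_of_mul_eq_pow_of_pos {a b w : ℤ} {n : ℕ} (hn : n ≠ 0)
    (hab : IsCoprime a b) (hb : 0 < b) (h : a * b = w ^ n) :
    ∃ d c : ℤ, a = d ^ n ∧ b = c ^ n := by
  obtain ⟨c, hc⟩ := exists_associated_pow_of_mul_eq_pow' hab.symm ((mul_comm b a).trans h)
  have hb_eq : b = (c.natAbs : ℤ) ^ n := by
    rw [← Int.natAbs_of_nonneg hb.le, ← Int.natAbs_eq_iff_associated.mpr hc, Int.natAbs_pow,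
      Nat.cast_pow]
  have hc0 : (c.natAbs : ℤ) ≠ 0 := by
    rintro h0
    rw [h0, zero_pow hn] at hb_eq
    exact hb.ne' hb_eq
  obtain ⟨d, rfl⟩ : (c.natAbs : ℤ) ∣ w :=
    (Int.pow_dvd_pow_iff hn).mp (hb_eq ▸ Dvd.intro_left a h)
  refine ⟨d, c.natAbs, mul_right_cancel₀ (pow_ne_zero n hc0) ?_, hb_eq⟩
  rw [← hb_eq, h, mul_pow, ← hb_eq, mul_comm]

theorem isCoprime_nine_mul_three_mul_sq_add_four_mul_sq {u r : ℤ} (h : IsCoprime (3 * u) (2 * r)) :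
    IsCoprime (9 * u) (3 * u ^ 2 + 4 * r ^ 2) := by
  have h3u : IsCoprime (3 * u) (3 * u ^ 2 + 4 * r ^ 2) := by
    rw [show 3 * u ^ 2 + 4 * r ^ 2 = (2 * r) ^ 2 + 3 * u * u by ring]
    exact (h.pow_right (n := 2)).add_mul_left_right u
  rw [show 9 * u = 3 * (3 * u) by ring]
  exact h3u.of_mul_left_left.mul_left h3u

theorem sub_eq_four_mul_sq_of_eq_pow {p : ℕ} (hp : 2 ≤ p) {x r a b : ℤ}
    (hx : x = 3 ^ (p - 1) * a ^ p) (hN : x ^ 2 + 12 * r ^ 2 = 3 * 7 ^ (p - 1) * b ^ p) :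
    7 ^ (p - 1) * b ^ p - 3 ^ (2 * p - 3) * a ^ (2 * p) = 4 * r ^ 2 := by
  obtain ⟨k, rfl⟩ : ∃ k, p = k + 2 := ⟨p - 2, by omega⟩
  rw [show k + 2 - 1 = k + 1 by omega, show 2 * (k + 2) - 3 = 2 * k + 1 by omega] at *
  subst hx
  refine mul_left_cancel₀ (three_ne_zero (α := ℤ)) ?_
  linear_combination -hN

theorem case2_descent_general
    (p : ℕ) (hp5 : 5 ≤ p)
    (x r y : ℤ) (hgcd : Int.gcd x r = 1)
    (heq : (x - 3 * r) ^ 3 + (x - 2 * r) ^ 3 + (x - r) ^ 3 + x ^ 3 +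
      (x + r) ^ 3 + (x + 2 * r) ^ 3 + (x + 3 * r) ^ 3 = y ^ p)
    (h7 : ¬ (7 : ℤ) ∣ x) (h2 : ¬ (2 : ℤ) ∣ x) (h3 : (3 : ℤ) ∣ x) :
    ∃ w₁ w₂ : ℤ, x = 3 ^ (p - 1) * w₁ ^ p ∧ x ^ 2 + 12 * r ^ 2 = 3 * 7 ^ (p - 1) * w₂ ^ p ∧
      7 ^ (p - 1) * w₂ ^ p - 3 ^ (2 * p - 3) * w₁ ^ (2 * p) = 4 * r ^ 2 := by
  have hp0 : p ≠ 0 := by omega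
  have hcop : IsCoprime x (2 * r) := IsCoprime.mul_right
    (isCoprime_comm.mp ((Int.prime_two.coprime_iff_not_dvd).mpr h2))
    (Int.isCoprime_iff_gcd_eq_one.mpr hgcd)
  have hprime7 : Prime (7 : ℤ) := by norm_num
  obtain ⟨u, rfl⟩ := h3
  obtain ⟨w, hw⟩ := hprime7.exists_eq_pow_pred_mul_pow_of_mul_eq_pow hp0
    ((sum_seven_cubes_eq _ r).symm.trans heq)
  have h7u : IsCoprime ((7 : ℤ) ^ (p - 1)) (9 * u) :=
    (hprime7.coprime_iff_not_dvd.mpr (by omega)).pow_left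
  obtain ⟨M, hM, hM'⟩ := h7u.exists_eq_mul_of_mul_eq_mul (by positivity)
    (show 9 * u * (3 * u ^ 2 + 4 * r ^ 2) = 7 ^ (p - 1) * w ^ p by rw [← hw]; ring)
  have hMpos : 0 < M := by
    have hu0 : u ≠ 0 := by omega
    have : 0 < 7 ^ (p - 1) * M := hM ▸ by positivity
    exact (pos_iff_pos_of_mul_pos this).mp (by positivity)
  obtain ⟨d, c, hd, hc⟩ := Int.exists_pow_of_mul_eq_pow_of_pos hp0
    ((isCoprime_nine_mul_three_mul_sq_add_four_mul_sq hcop).of_isCoprime_of_dvd_right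
      (Dvd.intro_left _ hM.symm)) hMpos hM'
  obtain ⟨e, rfl⟩ : (3 : ℤ) ∣ d :=
    Int.prime_three.dvd_of_dvd_pow (by rw [← hd]; exact Dvd.intro (3 * u) (by ring))
  have hx : 3 * u = 3 ^ (p - 1) * e ^ p :=
    eq_pow_pred_mul_pow_of_mul_eq_mul_pow three_ne_zero hp0 (by rw [← hd]; ring)
  have hN : (3 * u) ^ 2 + 12 * r ^ 2 = 3 * 7 ^ (p - 1) * c ^ p := by
    rw [← hc, mul_assoc, ← hM]; ring
  exact ⟨e, c, hx, hN, sub_eq_four_mul_sq_of_eq_pow (by omega) hx hN⟩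

theorem case2_descent
    (p : ℕ) (hp : p.Prime) (hp5 : 5 ≤ p)
    (x r y : ℤ) (hgcd : Int.gcd x r = 1) (hr : 1 ≤ r)
    (heq : (x - 3 * r) ^ 3 + (x - 2 * r) ^ 3 + (x - r) ^ 3 + x ^ 3 +
      (x + r) ^ 3 + (x + 2 * r) ^ 3 + (x + 3 * r) ^ 3 = y ^ p)
    (h7 : ¬ (7 : ℤ) ∣ x) (h2 : ¬ (2 : ℤ) ∣ x) (h3 : (3 : ℤ) ∣ x) :
    ∃ w₁ w₂ : ℤ, x = 3 ^ (p - 1) * w₁ ^ p ∧ x ^ 2 + 12 * r ^ 2 = 3 * 7 ^ (p - 1) * w₂ ^ p ∧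
      7 ^ (p - 1) * w₂ ^ p - 3 ^ (2 * p - 3) * w₁ ^ (2 * p) = 4 * r ^ 2 :=
  case2_descent_general p hp5 x r y hgcd heq h7 h2 h3
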